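/- Let A₁ and A₂ be disjoint subsets of {1,…,n} with |A₂| = 2m even, m ≥ 2, and |A₁| = a ≥ 1, and let P₁, …, P_k (k ≥ 1) be partitions of A₂ into pairs that are pairwise disjoint as sets of pairs. Let W = ∪_{t=1}^{k} W^(t), where W^(t) is the set of vertices of G(n,3,1) of the form {x} ∪ e with x ∈ A₁ and e ∈ P_t. Then the subgraph of G(n,3,1) induced on W is regular of degree (m−1) + (k−1)·((m−2) + 2·(a−1)), and hence the number of edges of G(n,3,1) with both endpoints in W equals (1/2)·k·a·m·((m−1) + (k−1)·((m−2) + 2·(a−1))). -/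

import Mathlib

/-- The vertices of `G(n,3,1)`: 3-element subsets of `{1, …, n}`. -/
abbrev Vtx (n : ℕ) := {s : Finset ℕ // s ⊆ Finset.Icc 1 n ∧ s.card = 3}

/-- The graph `G(n,3,1)`: two 3-element subsets of `{1, …, n}` are adjacent
iff they intersect in exactly one element. -/
def G (n : ℕ) : SimpleGraph (Vtx n) where
  Adj a b := (a.1 ∩ b.1).card = 1
  symm := ⟨fun a b h => by show (b.1 ∩ a.1).card = 1; rw [Finset.inter_comm]; exact h⟩
  loopless := ⟨fun a h => by
    have h' : (a.1 ∩ a.1).card = 1 := h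
    rw [Finset.inter_self, a.2.2] at h'; omega⟩

instance (n : ℕ) : DecidableRel (G n).Adj := fun a b =>
  inferInstanceAs (Decidable ((a.1 ∩ b.1).card = 1))

instance (n : ℕ) : Fintype (Vtx n) :=
  Fintype.subtype ((Finset.Icc 1 n).powerset.filter fun s => s.card = 3) (by
    intro s
    simp [Finset.mem_powerset, and_comm])

instance (n : ℕ) (s : Set (Vtx n)) : DecidableRel ((G n).induce s).Adj := fun a b =>
  inferInstanceAs (Decidable (((a : Vtx n).1 ∩ (b : Vtx n).1).card = 1))

/-- The number of edges of `G(n,3,1)` with both endpoints in `W`. -/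
def edgesIn (n : ℕ) (W : Finset (Vtx n)) : ℕ :=
  ((G n).induce (W : Set (Vtx n))).edgeFinset.card

/-- The independence number of `G(n,3,1)`. -/
noncomputable def alpha (n : ℕ) : ℕ :=
  sSup {k | ∃ W : Finset (Vtx n), W.card = k ∧ ∀ u ∈ W, ∀ v ∈ W, ¬ (G n).Adj u v}

/-- The minimal number of edges induced on a vertex subset of cardinality `l`. -/
noncomputable def rmin (n l : ℕ) : ℕ :=
  sInf {m | ∃ W : Finset (Vtx n), W.card = l ∧ edgesIn n W = m}

/-! A vertex of `W` is `{x} ∪ e` with `x ∈ A₁` and `e` a pair of some `P_t`; since `A₁` and `A₂`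
are disjoint, `(x, e)` is determined by the vertex, and `{x} ∪ e`, `{y} ∪ f` meet in
`[x = y] + |e ∩ f|` points. Fix `v = {x} ∪ e` with `e ∈ P_{t₀}`. Inside `W^(t₀)` the neighbours of
`v` are the `m - 1` vertices `{x} ∪ f`, `f ≠ e`. For `t ≠ t₀` the pairs of `P_t` partition
`A₂ ⊇ e` and none equals `e`, so exactly two of them meet `e`, each in one point: the neighbours in
`W^(t)` are the `m - 2` vertices `{x} ∪ f` with `f ∩ e = ∅` and the `2 (a - 1)` vertices `{y} ∪ f`
with `y ≠ x` and `|f ∩ e| = 1`. The edge count follows by the handshake lemma. -/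

open Finset Function

theorem Finset.sum_ite_eq_add_mul {ι : Type*} [Fintype ι] [DecidableEq ι] (i₀ : ι) (c d : ℕ) :
    ∑ i, (if i = i₀ then c else d) = c + (Fintype.card ι - 1) * d := by
  rw [← add_sum_erase _ _ (mem_univ i₀), if_pos rfl,
    sum_congr rfl fun i hi => if_neg (ne_of_mem_erase hi), sum_const,
    card_erase_of_mem (mem_univ _), card_univ, smul_eq_mul]

section Insert

variable {α : Type*} [DecidableEq α]

theorem Finset.card_insert_inter_insert {x y : α} {e f : Finset α} (hxf : x ∉ f) (hye : y ∉ e) :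
    #(insert x e ∩ insert y f) = (if x = y then 1 else 0) + #(e ∩ f) := by
  split_ifs with hxy
  · subst hxy
    rw [← insert_inter_distrib, card_insert_of_notMem (by simp [hxf]), add_comm]
  · rw [zero_add]
    congr 1
    ext z
    simp only [mem_inter, mem_insert]
    grind

theorem Finset.insert_injOn_product {A B : Finset α} (hAB : Disjoint A B) {P : Finset (Finset α)}
    (hP : ∀ e ∈ P, e ⊆ B) : Set.InjOn (fun xe : α × Finset α => insert xe.1 xe.2) ↑(A ×ˢ P) := by
  have inter_B : ∀ x ∈ A, ∀ e ∈ P, insert x e ∩ B = e := fun x hx e he => by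
    rw [insert_inter_of_notMem (disjoint_left.1 hAB hx), inter_eq_left.2 (hP e he)]
  rintro ⟨x, e⟩ hxe ⟨y, f⟩ hyf (h : insert x e = insert y f)
  simp only [coe_product, Set.mem_prod, mem_coe] at hxe hyf
  have hef : e = f := by
    rw [← inter_B x hxe.1 e hxe.2, ← inter_B y hyf.1 f hyf.2, h]
  have hxy : x = y := by
    have hx : x ∈ insert y f := h ▸ mem_insert_self x e
    rcases mem_insert.1 hx with hx | hx
    · exact hx
    · exact absurd (hP f hyf.2 hx) (disjoint_left.1 hAB hxe.1)
  rw [hxy, hef]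

end Insert

section PairPartition

variable {α : Type*} [DecidableEq α]

structure IsPairPartition (P : Finset (Finset α)) (A : Finset α) : Prop where
  card_eq_two : ∀ e ∈ P, #e = 2
  pairwise_disjoint : (P : Set (Finset α)).Pairwise Disjoint
  biUnion_eq : P.biUnion id = A

namespace IsPairPartition

variable {P : Finset (Finset α)} {A e : Finset α}

theorem subset_of_mem (hP : IsPairPartition P A) (he : e ∈ P) : e ⊆ A :=
  hP.biUnion_eq ▸ subset_biUnion_of_mem id he

theorem card_eq_two_mul (hP : IsPairPartition P A) : #A = 2 * #P := by
  rw [← hP.biUnion_eq, card_biUnion (t := id) fun e he f hf hef => hP.pairwise_disjoint he hf hef,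
    mul_comm]
  exact sum_const_nat fun e he => hP.card_eq_two e he

theorem sum_card_inter (hP : IsPairPartition P A) (he : e ⊆ A) : ∑ f ∈ P, #(e ∩ f) = #e := by
  calc ∑ f ∈ P, #(e ∩ f) = #(P.biUnion (e ∩ ·)) := (card_biUnion fun f hf g hg hfg =>
        (hP.pairwise_disjoint hf hg hfg).mono inter_subset_right inter_subset_right).symm
    _ = #(e ∩ P.biUnion id) := by rw [inter_biUnion]; rfl
    _ = #e := by rw [hP.biUnion_eq, inter_eq_left.2 he]

theorem card_inter_of_mem (hP : IsPairPartition P A) {f : Finset α} (he : e ∈ P) (hf : f ∈ P) :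
    #(e ∩ f) = if e = f then 2 else 0 := by
  split_ifs with hef
  · rw [← hef, inter_self, hP.card_eq_two e he]
  · rw [card_eq_zero, ← disjoint_iff_inter_eq_empty]
    exact hP.pairwise_disjoint he hf hef

theorem card_filter_inter_eq_zero_of_mem (hP : IsPairPartition P A) (he : e ∈ P) :
    #(P.filter fun f => #(e ∩ f) = 0) = #P - 1 := by
  rw [← card_erase_of_mem he, ← filter_ne']
  congr 1
  refine filter_congr fun f hf => ?_
  rw [hP.card_inter_of_mem he hf]
  split_ifs with hef <;> simp [hef, eq_comm]

theorem card_filter_inter_eq_one_of_mem (hP : IsPairPartition P A) (he : e ∈ P) :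
    #(P.filter fun f => #(e ∩ f) = 1) = 0 := by
  rw [card_eq_zero, filter_eq_empty_iff]
  intro f hf
  rw [hP.card_inter_of_mem he hf]
  split_ifs <;> simp

theorem card_inter_le_one_of_notMem (hP : IsPairPartition P A) (he : #e = 2) (heP : e ∉ P)
    {f : Finset α} (hf : f ∈ P) : #(e ∩ f) ≤ 1 := by
  by_contra! h
  have hee : e ∩ f = e := eq_of_subset_of_card_le inter_subset_left (by omega)
  have hef : e ∩ f = f := eq_of_subset_of_card_le inter_subset_right
    (by rw [hP.card_eq_two f hf]; omega)
  exact heP (hee.symm.trans hef ▸ hf)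

theorem card_filter_inter_eq_one_of_notMem (hP : IsPairPartition P A) (heA : e ⊆ A) (he : #e = 2)
    (heP : e ∉ P) : #(P.filter fun f => #(e ∩ f) = 1) = 2 := by
  -- the sizes `#(e ∩ f)` are at most `1` and add up to `#e = 2`
  rw [card_filter, ← he, ← hP.sum_card_inter heA]
  refine sum_congr rfl fun f hf => ?_
  have := hP.card_inter_le_one_of_notMem he heP hf
  split_ifs <;> omega

theorem card_filter_inter_eq_zero_of_notMem (hP : IsPairPartition P A) (heA : e ⊆ A)
    (he : #e = 2) (heP : e ∉ P) : #(P.filter fun f => #(e ∩ f) = 0) = #P - 2 := by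
  rw [← card_filter_add_card_filter_not (s := P) (fun f => #(e ∩ f) = 1),
    hP.card_filter_inter_eq_one_of_notMem heA he heP, add_tsub_cancel_left]
  congr 1
  refine filter_congr fun f hf => ?_
  have := hP.card_inter_le_one_of_notMem he heP hf
  omega

end IsPairPartition

end PairPartition

section Blocks

variable {α : Type*} [DecidableEq α] {A B : Finset α} {P : Finset (Finset α)}
  {p : Finset α → Prop} {V : Finset (Subtype p)}

theorem card_filter_card_inter_insert_eq_one (hAB : Disjoint A B) (hP : ∀ f ∈ P, f ⊆ B)
    {x : α} {e : Finset α} (hx : x ∈ A) (he : e ⊆ B) :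
    #((A ×ˢ P).filter fun yf => #(insert x e ∩ insert yf.1 yf.2) = 1) =
      #(P.filter fun f => #(e ∩ f) = 0) + (#A - 1) * #(P.filter fun f => #(e ∩ f) = 1) := by
  have hcard : ∀ y ∈ A, ∀ f ∈ P,
      #(insert x e ∩ insert y f) = (if x = y then 1 else 0) + #(e ∩ f) := fun y hy f hf =>
    card_insert_inter_insert (fun h => disjoint_left.1 hAB hx (hP f hf h))
      (fun h => disjoint_left.1 hAB hy (he h))
  rw [card_filter, sum_product, ← add_sum_erase _ _ hx, ← card_erase_of_mem hx, ← smul_eq_mul,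
    ← sum_const]
  congr 1
  · rw [card_filter]
    refine sum_congr rfl fun f hf => ?_
    rw [hcard x hx f hf, if_pos rfl]
    simp
  · refine sum_congr rfl fun y hy => ?_
    rw [card_filter]
    refine sum_congr rfl fun f hf => ?_
    simp [hcard y (mem_of_mem_erase hy) f hf, Ne.symm (ne_of_mem_erase hy)]

theorem map_subtype_eq_image_insert (hp : ∀ x ∈ A, ∀ e ∈ P, p (insert x e))
    (hV : ∀ v : Subtype p, v ∈ V ↔ ∃ x ∈ A, ∃ e ∈ P, v.1 = insert x e) :
    V.map (.subtype p) = (A ×ˢ P).image fun xe => insert xe.1 xe.2 := by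
  ext s
  simp only [mem_map, mem_image, mem_product, Prod.exists, Function.Embedding.subtype_apply]
  constructor
  · rintro ⟨v, hv, rfl⟩
    obtain ⟨x, hx, e, he, hve⟩ := (hV v).1 hv
    exact ⟨x, e, ⟨hx, he⟩, hve.symm⟩
  · rintro ⟨x, e, ⟨hx, he⟩, rfl⟩
    exact ⟨⟨insert x e, hp x hx e he⟩, (hV _).2 ⟨x, hx, e, he, rfl⟩, rfl⟩

theorem card_filter_eq_card_filter_product (hAB : Disjoint A B) (hP : ∀ f ∈ P, f ⊆ B)
    (hp : ∀ x ∈ A, ∀ e ∈ P, p (insert x e))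
    (hV : ∀ v : Subtype p, v ∈ V ↔ ∃ x ∈ A, ∃ e ∈ P, v.1 = insert x e)
    (q : Finset α → Prop) [DecidablePred q] :
    #(V.filter fun v => q v.1) = #((A ×ˢ P).filter fun xe => q (insert xe.1 xe.2)) := by
  have hmap : (V.filter fun v => q v.1).map (.subtype p) = (V.map (.subtype p)).filter q := by
    rw [filter_map]
    rfl
  rw [← card_map (.subtype p), hmap, map_subtype_eq_image_insert hp hV, filter_image,
    card_image_of_injOn ((insert_injOn_product hAB hP).mono (coe_subset.2 (filter_subset _ _)))]

theorem card_eq_card_mul_card (hAB : Disjoint A B) (hP : ∀ f ∈ P, f ⊆ B)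
    (hp : ∀ x ∈ A, ∀ e ∈ P, p (insert x e))
    (hV : ∀ v : Subtype p, v ∈ V ↔ ∃ x ∈ A, ∃ e ∈ P, v.1 = insert x e) :
    #V = #A * #P := by
  rw [← card_map (.subtype p), map_subtype_eq_image_insert hp hV,
    card_image_of_injOn (insert_injOn_product hAB hP), card_product]

theorem disjoint_of_disjoint_blocks (hAB : Disjoint A B) {P' : Finset (Finset α)}
    (hP : ∀ f ∈ P, f ⊆ B) (hP' : ∀ f ∈ P', f ⊆ B) (hPP' : Disjoint P P') {V' : Finset (Subtype p)}
    (hV : ∀ v : Subtype p, v ∈ V ↔ ∃ x ∈ A, ∃ e ∈ P, v.1 = insert x e)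
    (hV' : ∀ v : Subtype p, v ∈ V' ↔ ∃ x ∈ A, ∃ e ∈ P', v.1 = insert x e) :
    Disjoint V V' := by
  refine disjoint_left.2 fun v hv hv' => ?_
  obtain ⟨x, hx, e, he, hve⟩ := (hV v).1 hv
  obtain ⟨y, hy, f, hf, hvf⟩ := (hV' v).1 hv'
  have hPP'B : ∀ f ∈ P ∪ P', f ⊆ B := by simpa [or_imp, forall_and] using ⟨hP, hP'⟩
  have hef : (x, e) = (y, f) := insert_injOn_product hAB hPP'B (by simp [hx, he])
    (by simp [hy, hf]) (hve.symm.trans hvf)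
  obtain ⟨-, rfl⟩ := Prod.mk.inj hef
  exact disjoint_left.1 hPP' he hf

theorem card_filter_card_inter_eq_one_of_isPairPartition (hAB : Disjoint A B)
    (hP : IsPairPartition P B) (hp : ∀ x ∈ A, ∀ e ∈ P, p (insert x e))
    (hV : ∀ v : Subtype p, v ∈ V ↔ ∃ x ∈ A, ∃ e ∈ P, v.1 = insert x e)
    {x : α} {e : Finset α} (hx : x ∈ A) (heB : e ⊆ B) (he : #e = 2) :
    #(V.filter fun w => #(insert x e ∩ w.1) = 1) =
      if e ∈ P then #P - 1 else #P - 2 + 2 * (#A - 1) := by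
  have hPB : ∀ f ∈ P, f ⊆ B := fun f hf => hP.subset_of_mem hf
  rw [card_filter_eq_card_filter_product hAB hPB hp hV fun s => #(insert x e ∩ s) = 1,
    card_filter_card_inter_insert_eq_one hAB hPB hx heB]
  split_ifs with heP
  · rw [hP.card_filter_inter_eq_zero_of_mem heP, hP.card_filter_inter_eq_one_of_mem heP,
      mul_zero, add_zero]
  · rw [hP.card_filter_inter_eq_zero_of_notMem heB he heP,
      hP.card_filter_inter_eq_one_of_notMem heB he heP, mul_comm]

end Blocks

section UnionOfBlocks

variable {α ι : Type*} [DecidableEq α] {A B : Finset α}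
  {P : ι → Finset (Finset α)} {p : Finset α → Prop} {V : ι → Finset (Subtype p)}

theorem pairwiseDisjoint_blocks (hAB : Disjoint A B) (hP : ∀ t, IsPairPartition (P t) B)
    (hPP : Pairwise (Disjoint on P))
    (hV : ∀ t, ∀ v : Subtype p, v ∈ V t ↔ ∃ x ∈ A, ∃ e ∈ P t, v.1 = insert x e) :
    (Set.univ : Set ι).PairwiseDisjoint V := fun t _ t' _ htt' =>
  disjoint_of_disjoint_blocks hAB (fun _ he => (hP t).subset_of_mem he)
    (fun _ he => (hP t').subset_of_mem he) (hPP htt') (hV t) (hV t')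

variable [Fintype ι]

theorem card_biUnion_blocks {m : ℕ} (hAB : Disjoint A B) (hB : #B = 2 * m)
    (hP : ∀ t, IsPairPartition (P t) B) (hPP : Pairwise (Disjoint on P))
    (hp : ∀ t, ∀ x ∈ A, ∀ e ∈ P t, p (insert x e))
    (hV : ∀ t, ∀ v : Subtype p, v ∈ V t ↔ ∃ x ∈ A, ∃ e ∈ P t, v.1 = insert x e) :
    #(univ.biUnion V) = Fintype.card ι * (#A * m) := by
  have hcard (t : ι) : #(V t) = #A * m := by
    rw [card_eq_card_mul_card hAB (fun _ he => (hP t).subset_of_mem he) (hp t) (hV t)]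
    have := (hP t).card_eq_two_mul
    congr
    omega
  rw [card_biUnion (by simpa using pairwiseDisjoint_blocks hAB hP hPP hV),
    sum_const_nat fun t _ => hcard t, card_univ]

theorem card_filter_biUnion_blocks [DecidableEq ι] {m : ℕ} (hAB : Disjoint A B) (hB : #B = 2 * m)
    (hP : ∀ t, IsPairPartition (P t) B) (hPP : Pairwise (Disjoint on P))
    (hp : ∀ t, ∀ x ∈ A, ∀ e ∈ P t, p (insert x e))
    (hV : ∀ t, ∀ v : Subtype p, v ∈ V t ↔ ∃ x ∈ A, ∃ e ∈ P t, v.1 = insert x e)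
    {t₀ : ι} {x : α} {e : Finset α} (hx : x ∈ A) (he : e ∈ P t₀) :
    #((univ.biUnion V).filter fun w => #(insert x e ∩ w.1) = 1) =
      (m - 1) + (Fintype.card ι - 1) * ((m - 2) + 2 * (#A - 1)) := by
  have hblock (t : ι) : #((V t).filter fun w => #(insert x e ∩ w.1) = 1) =
      if t = t₀ then m - 1 else (m - 2) + 2 * (#A - 1) := by
    have hmem : e ∈ P t ↔ t = t₀ :=
      ⟨fun het => by_contra fun ht => disjoint_left.1 (hPP (Ne.symm ht)) he het, (· ▸ he)⟩
    have hm : #(P t) = m := by have := (hP t).card_eq_two_mul; omega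
    rw [card_filter_card_inter_eq_one_of_isPairPartition hAB (hP t) (hp t) (hV t) hx
      ((hP t₀).subset_of_mem he) ((hP t₀).card_eq_two e he), hm]
    simp only [hmem]
  rw [filter_biUnion, card_biUnion fun t _ t' _ htt' => disjoint_filter_filter
      (pairwiseDisjoint_blocks hAB hP hPP hV (Set.mem_univ t) (Set.mem_univ t') htt'),
    sum_congr rfl fun t _ => hblock t, sum_ite_eq_add_mul]

end UnionOfBlocks

theorem SimpleGraph.degree_induce_eq_card_filter {V : Type*} [Fintype V] [DecidableEq V]
    (G : SimpleGraph V) [DecidableRel G.Adj] (W : Finset V) (v : (W : Set V))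
    [Fintype ((G.induce (W : Set V)).neighborSet v)] :
    (G.induce (W : Set V)).degree v = #(W.filter (G.Adj v)) := by
  have h := congrArg card (map_neighborFinset_induce (G := G) (s := (W : Set V)) v)
  rw [card_map] at h
  convert h using 1
  · rw [← card_neighborFinset_eq_degree]
    congr!
  · simp [neighborFinset_eq_filter, filter_inter]

theorem SimpleGraph.IsRegularOfDegree.two_mul_card_edgeFinset {V : Type*} [Fintype V]
    {G : SimpleGraph V} [DecidableRel G.Adj] {d : ℕ} (h : G.IsRegularOfDegree d) :
    2 * #G.edgeFinset = Fintype.card V * d := by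
  rw [← sum_degrees_eq_twice_card_edges, sum_const_nat fun v _ => h v, card_univ]

theorem stmt_11_general (n m a k : ℕ)
    (A₁ A₂ : Finset ℕ)
    (hA₁ : A₁ ⊆ Finset.Icc 1 n) (hA₂ : A₂ ⊆ Finset.Icc 1 n) (hdisj : Disjoint A₁ A₂)
    (hA₁card : A₁.card = a) (hA₂card : A₂.card = 2 * m)
    (P : Fin k → Finset (Finset ℕ))
    (hPpair : ∀ t, ∀ e ∈ P t, e.card = 2)
    (hPdisj : ∀ t, ((P t : Set (Finset ℕ))).Pairwise Disjoint)
    (hPunion : ∀ t, (P t).biUnion id = A₂)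
    (hPP : ∀ t t', t ≠ t' → Disjoint (P t) (P t'))
    (Wt : Fin k → Finset (Vtx n))
    (hWt : ∀ t, ∀ v : Vtx n, v ∈ Wt t ↔ ∃ x ∈ A₁, ∃ e ∈ P t, v.1 = insert x e)
    (W : Finset (Vtx n)) (hw : W = Finset.univ.biUnion Wt) :
    (∀ v : (W : Set (Vtx n)), ((G n).induce (W : Set (Vtx n))).degree v =
      (m - 1) + (k - 1) * ((m - 2) + 2 * (a - 1))) ∧
    edgesIn n W = k * a * m * ((m - 1) + (k - 1) * ((m - 2) + 2 * (a - 1))) / 2 := by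
  have hP (t : Fin k) : IsPairPartition (P t) A₂ := ⟨hPpair t, hPdisj t, hPunion t⟩
  have hPP' : Pairwise (Disjoint on P) := fun t t' htt' => hPP t t' htt'
  have hvtx (t : Fin k) : ∀ x ∈ A₁, ∀ e ∈ P t, insert x e ⊆ Icc 1 n ∧ #(insert x e) = 3 :=
    fun x hx e he => ⟨insert_subset (hA₁ hx) (((hP t).subset_of_mem he).trans hA₂), by
      rw [card_insert_of_notMem fun h => disjoint_left.1 hdisj hx ((hP t).subset_of_mem he h),
        hPpair t e he]⟩
  have hdeg (v : (W : Set (Vtx n))) : ((G n).induce (W : Set (Vtx n))).degree v =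
      (m - 1) + (k - 1) * ((m - 2) + 2 * (a - 1)) := by
    subst hw
    obtain ⟨t₀, -, hvt₀⟩ := mem_biUnion.1 v.2
    obtain ⟨x₀, hx₀, e₀, he₀, hve⟩ := (hWt t₀ v).1 hvt₀
    have hcount := card_filter_biUnion_blocks hdisj hA₂card hP hPP' hvtx hWt hx₀ he₀
    rw [hA₁card, Fintype.card_fin, ← hve] at hcount
    rw [(G n).degree_induce_eq_card_filter, ← hcount]
    rfl
  refine ⟨hdeg, ?_⟩
  have hcard := card_biUnion_blocks hdisj hA₂card hP hPP' hvtx hWt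
  rw [Fintype.card_fin, hA₁card, ← hw] at hcard
  have h2 := SimpleGraph.IsRegularOfDegree.two_mul_card_edgeFinset hdeg
  simp only [SetLike.coe_sort_coe, Fintype.card_coe, hcard, ← mul_assoc] at h2
  unfold edgesIn
  omega

/-- Let `A₁, A₂ ⊆ {1, …, n}` be disjoint with `|A₂| = 2m`, `m ≥ 2`, `|A₁| = a ≥ 1`,
and let `P₁, …, P_k` (`k ≥ 1`) be pairwise disjoint partitions of `A₂` into pairs.
Let `W = ⋃_t W⁽ᵗ⁾` where `W⁽ᵗ⁾` consists of the vertices `{x} ∪ e`, `x ∈ A₁`,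
`e ∈ P_t`. Then the subgraph induced on `W` is regular of degree
`(m−1) + (k−1)·((m−2) + 2(a−1))`, and `W` spans exactly
`(1/2)·k·a·m·((m−1) + (k−1)·((m−2) + 2(a−1)))` edges of `G(n,3,1)`. -/
theorem stmt_11 (n m a k : ℕ) (hk : 1 ≤ k) (hm : 2 ≤ m) (ha : 1 ≤ a)
    (A₁ A₂ : Finset ℕ)
    (hA₁ : A₁ ⊆ Finset.Icc 1 n) (hA₂ : A₂ ⊆ Finset.Icc 1 n) (hdisj : Disjoint A₁ A₂)
    (hA₁card : A₁.card = a) (hA₂card : A₂.card = 2 * m)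
    (P : Fin k → Finset (Finset ℕ))
    (hPpair : ∀ t, ∀ e ∈ P t, e.card = 2)
    (hPdisj : ∀ t, ((P t : Set (Finset ℕ))).Pairwise Disjoint)
    (hPunion : ∀ t, (P t).biUnion id = A₂)
    (hPP : ∀ t t', t ≠ t' → Disjoint (P t) (P t'))
    (Wt : Fin k → Finset (Vtx n))
    (hWt : ∀ t, ∀ v : Vtx n, v ∈ Wt t ↔ ∃ x ∈ A₁, ∃ e ∈ P t, v.1 = insert x e)
    (W : Finset (Vtx n)) (hw : W = Finset.univ.biUnion Wt) :
    (∀ v : (W : Set (Vtx n)), ((G n).induce (W : Set (Vtx n))).degree v =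
      (m - 1) + (k - 1) * ((m - 2) + 2 * (a - 1))) ∧
    edgesIn n W = k * a * m * ((m - 1) + (k - 1) * ((m - 2) + 2 * (a - 1))) / 2 :=
  stmt_11_general n m a k A₁ A₂ hA₁ hA₂ hdisj hA₁card hA₂card P hPpair hPdisj hPunion hPP Wt hWt W
    hw
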